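/- (Theorem 3, noisy recovery under the observability condition.) Let A ∈ ℝ^{n×n}, B ∈ ℝ^{n×m}, C ∈ ℝ^{p×n}. Assume rank(O_K) = n, assume the product matrix CB ∈ ℝ^{p×m} satisfies the RIP with constant δ_{2s} < √2 − 1, and assume the rank condition holds. Then there exists a constant C_s, depending only on A, B, C, K and s, with the following property: for every ε > 0, every (r̄_k)_{k=0}^K and s-sparse (ū_k)_{k=0}^{K−1} with r̄_{k+1} = A r̄_k + B ū_k for k = 0,…,K−1, every (y_k)_{k=0}^K with y_k = C r̄_k + e_k and ‖e_k‖₂ ≤ ε for k = 0,…,K, and every solution ((r*_k),(u*_k)) of Problem (P2) with tolerance ε in which every u*_k is s-sparse, one has ∑_{k=0}^{K−1} ‖u*_k − ū_k‖₂ ≤ C_s ε. -/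

import Mathlib

open Matrix Finset

noncomputable def l2norm {k : ℕ} (x : Fin k → ℝ) : ℝ := Real.sqrt (∑ i, (x i) ^ 2)

def l1norm {k : ℕ} (x : Fin k → ℝ) : ℝ := ∑ i, |x i|

def Sparse {k : ℕ} (s : ℕ) (x : Fin k → ℝ) : Prop :=
  (Finset.univ.filter fun i => x i ≠ 0).card ≤ s

def RIP {n m : ℕ} (s : ℕ) (δ : ℝ) (Φ : Matrix (Fin n) (Fin m) ℝ) : Prop :=
  ∀ c : Fin m → ℝ, Sparse s c →
    (1 - δ) * (l2norm c) ^ 2 ≤ (l2norm (Φ.mulVec c)) ^ 2 ∧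
    (l2norm (Φ.mulVec c)) ^ 2 ≤ (1 + δ) * (l2norm c) ^ 2

/-- The observability matrix O_K = [C; CA; …; CA^K], with block rows C·Aⁱ. -/
def obsMat {n p : ℕ} (A : Matrix (Fin n) (Fin n) ℝ) (C : Matrix (Fin p) (Fin n) ℝ) (K : ℕ) :
    Matrix (Fin (K + 1) × Fin p) (Fin n) ℝ :=
  fun q j => (C * A ^ (q.1 : ℕ)) q.2 j

/-- The rank condition rank([O_K  J_K^{2s}]) = n + rank(J_K^{2s}) for all
J_K^{2s}, in operational form: the only way a state x together with a sequence
of 2s-sparse inputs can produce zero output for all times 0,…,K is x = 0. -/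
def SparseRankCondition {n p m : ℕ} (A : Matrix (Fin n) (Fin n) ℝ) (B : Matrix (Fin n) (Fin m) ℝ)
    (C : Matrix (Fin p) (Fin n) ℝ) (K s : ℕ) : Prop :=
  ∀ (x : Fin n → ℝ) (v : Fin K → Fin m → ℝ),
    (∀ k, Sparse (2 * s) (v k)) →
    (∀ i : Fin (K + 1),
      (C * A ^ (i : ℕ)).mulVec x +
        ∑ j ∈ Finset.univ.filter (fun j : Fin K => (j : ℕ) < (i : ℕ)),
          (C * A ^ ((i : ℕ) - 1 - (j : ℕ)) * B).mulVec (v j) = 0) →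
    x = 0

/-- Feasibility for Problem (P2): the dynamics hold and each output residual is
within the tolerance ε. -/
def FeasibleP2 {n p m K : ℕ} (A : Matrix (Fin n) (Fin n) ℝ) (B : Matrix (Fin n) (Fin m) ℝ)
    (C : Matrix (Fin p) (Fin n) ℝ) (y : Fin (K + 1) → Fin p → ℝ) (ε : ℝ)
    (r : Fin (K + 1) → Fin n → ℝ) (u : Fin K → Fin m → ℝ) : Prop :=
  (∀ k : Fin K, r k.succ = A.mulVec (r k.castSucc) + B.mulVec (u k)) ∧
    ∀ k, l2norm (y k - C.mulVec (r k)) ≤ ε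

/-- A solution of Problem (P2): feasible and minimizing the total ℓ1 norm of the
input sequence among all feasible pairs. -/
def SolutionP2 {n p m K : ℕ} (A : Matrix (Fin n) (Fin n) ℝ) (B : Matrix (Fin n) (Fin m) ℝ)
    (C : Matrix (Fin p) (Fin n) ℝ) (y : Fin (K + 1) → Fin p → ℝ) (ε : ℝ)
    (r : Fin (K + 1) → Fin n → ℝ) (u : Fin K → Fin m → ℝ) : Prop :=
  FeasibleP2 A B C y ε r u ∧
    ∀ (r' : Fin (K + 1) → Fin n → ℝ) (u' : Fin K → Fin m → ℝ),
      FeasibleP2 A B C y ε r' u' → ∑ k, l1norm (u k) ≤ ∑ k, l1norm (u' k)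

/-!
Since both `(rbar, ubar)` and `(rstar, ustar)` are feasible, the recovery error
`(rstar 0 - rbar 0, ustar - ubar)` is a pair (initial state, inputs) with `2s`-sparse inputs whose
outputs have size at most `2ε`. The rank
condition kills the initial state of such a pair with zero output, after which the lower RIP bound
for `C * B` peels off the inputs one time step at a time. Hence the output map is injective on each
subspace of inputs with a fixed support of size `2s`; by finite dimensionality it is bounded below
there, and the finitely many supports give a uniform constant.
-/

theorem l2norm_eq_norm_toLp {k : ℕ} (x : Fin k → ℝ) :
    l2norm x = ‖(WithLp.toLp 2 x : EuclideanSpace ℝ (Fin k))‖ := by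
  simp [l2norm, EuclideanSpace.norm_eq, sq_abs]

theorem l2norm_eq_zero {k : ℕ} {x : Fin k → ℝ} : l2norm x = 0 ↔ x = 0 := by
  rw [l2norm_eq_norm_toLp, norm_eq_zero, WithLp.toLp_eq_zero]

theorem l2norm_sub_le {k : ℕ} (a b : Fin k → ℝ) : l2norm (a - b) ≤ l2norm a + l2norm b := by
  simpa only [l2norm_eq_norm_toLp, WithLp.toLp_sub] using norm_sub_le _ _

theorem norm_le_l2norm {k : ℕ} (x : Fin k → ℝ) : ‖x‖ ≤ l2norm x := by
  rw [l2norm_eq_norm_toLp]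
  exact (pi_norm_le_iff_of_nonneg (norm_nonneg _)).2 fun i =>
    PiLp.norm_apply_le (WithLp.toLp 2 x) i

theorem l2norm_le_sqrt_mul_norm {k : ℕ} (x : Fin k → ℝ) : l2norm x ≤ √k * ‖x‖ := by
  rw [← Real.sqrt_sq (norm_nonneg x), ← Real.sqrt_mul (Nat.cast_nonneg k)]
  apply Real.sqrt_le_sqrt
  calc ∑ i, x i ^ 2 ≤ ∑ _i : Fin k, ‖x‖ ^ 2 :=
        sum_le_sum fun i _ => by
          rw [← sq_abs, ← Real.norm_eq_abs]
          exact pow_le_pow_left₀ (norm_nonneg _) (norm_le_pi_norm x i) 2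
    _ = k * ‖x‖ ^ 2 := by simp

theorem Sparse.sub {k s t : ℕ} {a b : Fin k → ℝ} (ha : Sparse s a) (hb : Sparse t b) :
    Sparse (s + t) (a - b) := by
  unfold Sparse at *
  calc _ ≤ (univ.filter fun i => a i ≠ 0).card + (univ.filter fun i => b i ≠ 0).card := by
        refine (card_le_card fun i => ?_).trans (card_union_le _ _)
        simp only [mem_filter, mem_univ, true_and, mem_union, Pi.sub_apply]
        contrapose!
        rintro ⟨ha, hb⟩
        rw [ha, hb, sub_zero]
    _ ≤ s + t := add_le_add ha hb

theorem RIP.eq_zero_of_mulVec_eq_zero {k l s : ℕ} {δ : ℝ} {Φ : Matrix (Fin k) (Fin l) ℝ}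
    (hΦ : RIP s δ Φ) (hδ : δ < 1) {c : Fin l → ℝ} (hc : Sparse s c) (h0 : Φ *ᵥ c = 0) :
    c = 0 := by
  have hlow := (hΦ c hc).1
  rw [h0, l2norm_eq_zero.2 rfl] at hlow
  have : l2norm c ^ 2 = 0 := le_antisymm (by nlinarith) (sq_nonneg _)
  exact l2norm_eq_zero.1 (pow_eq_zero_iff two_ne_zero |>.1 this)

theorem LinearMap.exists_norm_le_mul_norm_of_disjoint_ker {𝕜 E F ι : Type*}
    [NontriviallyNormedField 𝕜] [CompleteSpace 𝕜] [NormedAddCommGroup E] [NormedSpace 𝕜 E]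
    [FiniteDimensional 𝕜 E] [NormedAddCommGroup F] [NormedSpace 𝕜 F] [Finite ι]
    (f : E →ₗ[𝕜] F) (V : ι → Submodule 𝕜 E) (hV : ∀ i, Disjoint (V i) (LinearMap.ker f)) :
    ∃ c, 0 ≤ c ∧ ∀ i, ∀ z ∈ V i, ‖z‖ ≤ c * ‖f z‖ := by
  have hK : ∀ i, ∃ K, AntilipschitzWith K (f.domRestrict (V i)) := fun i =>
    let ⟨K, _, hK⟩ := (f.domRestrict (V i)).injective_iff_antilipschitz.1
      (LinearMap.injective_domRestrict_iff.2 (hV i))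
    ⟨K, hK⟩
  choose K hK using hK
  obtain ⟨M, hM⟩ := Finite.exists_le K
  refine ⟨M, M.2, fun i z hz => ?_⟩
  calc ‖z‖ = ‖(⟨z, hz⟩ : V i)‖ := rfl
    _ ≤ K i * ‖f z‖ := ZeroHomClass.bound_of_antilipschitz _ (hK i) _
    _ ≤ M * ‖f z‖ := by gcongr; exact hM i

section LinearSystem

variable {n m p K : ℕ} (A : Matrix (Fin n) (Fin n) ℝ) (B : Matrix (Fin n) (Fin m) ℝ)
  (C : Matrix (Fin p) (Fin n) ℝ)

def IsTrajectory (r : Fin (K + 1) → Fin n → ℝ) (u : Fin K → Fin m → ℝ) : Prop :=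
  ∀ k : Fin K, r k.succ = A *ᵥ r k.castSucc + B *ᵥ u k

def trajectory (x : Fin n → ℝ) (u : Fin K → Fin m → ℝ) : Fin (K + 1) → Fin n → ℝ :=
  fun i => Fin.induction x (fun k r => A *ᵥ r + B *ᵥ u k) i

theorem isTrajectory_trajectory (x : Fin n → ℝ) (u : Fin K → Fin m → ℝ) :
    IsTrajectory A B (trajectory A B x u) u :=
  fun k => Fin.induction_succ _ _ k

-- Written in the closed form used by `SparseRankCondition`, so that the rank condition applies
-- to it verbatim.
variable (K) in
def outputMap :
    (Fin n → ℝ) × (Fin K → Fin m → ℝ) →ₗ[ℝ] Fin (K + 1) → Fin p → ℝ where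
  toFun z i := (C * A ^ (i : ℕ)) *ᵥ z.1 +
    ∑ j ∈ univ.filter (fun j : Fin K => (j : ℕ) < i), (C * A ^ ((i : ℕ) - 1 - j) * B) *ᵥ z.2 j
  map_add' z w := by
    funext i
    simp only [Prod.fst_add, Prod.snd_add, Pi.add_apply, mulVec_add, sum_add_distrib]
    abel
  map_smul' a z := by
    funext i
    simp only [Prod.smul_fst, Prod.smul_snd, Pi.smul_apply, mulVec_smul, smul_sum, smul_add,
      RingHom.id_apply]

variable {A B}

theorem IsTrajectory.sub {r r' : Fin (K + 1) → Fin n → ℝ} {u u' : Fin K → Fin m → ℝ}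
    (h : IsTrajectory A B r u) (h' : IsTrajectory A B r' u') :
    IsTrajectory A B (r - r') (u - u') := fun k => by
  simp only [Pi.sub_apply, h k, h' k, mulVec_sub]
  abel

theorem IsTrajectory.eq_sum {r : Fin (K + 1) → Fin n → ℝ} {u : Fin K → Fin m → ℝ}
    (h : IsTrajectory A B r u) (i : Fin (K + 1)) :
    r i = (A ^ (i : ℕ)) *ᵥ r 0 +
      ∑ j ∈ univ.filter (fun j : Fin K => (j : ℕ) < i), (A ^ ((i : ℕ) - 1 - j) * B) *ᵥ u j := by
  induction i using Fin.induction with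
  | zero => simp
  | succ k ih =>
    have hfilter : univ.filter (fun j : Fin K => (j : ℕ) < k.succ) =
        insert k (univ.filter fun j : Fin K => (j : ℕ) < k) := by
      ext j
      simp only [mem_filter, mem_univ, true_and, mem_insert, Fin.val_succ, Fin.ext_iff]
      omega
    have hshift : ∀ j ∈ univ.filter (fun j : Fin K => (j : ℕ) < k),
        A *ᵥ ((A ^ ((k : ℕ) - 1 - j) * B) *ᵥ u j) = (A ^ ((k : ℕ) + 1 - 1 - j) * B) *ᵥ u j := by
      intro j hj
      rw [mem_filter] at hj
      rw [mulVec_mulVec, ← Matrix.mul_assoc, ← pow_succ',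
        show (k : ℕ) + 1 - 1 - j = k - 1 - j + 1 by omega]
    rw [h k, ih, hfilter, sum_insert (by simp), mulVec_add, mulVec_mulVec, ← pow_succ', mulVec_sum]
    simp only [Fin.val_succ, Fin.val_castSucc]
    rw [sum_congr rfl hshift, show (k : ℕ) + 1 - 1 - k = 0 by omega, pow_zero, Matrix.one_mul]
    abel

theorem IsTrajectory.outputMap_apply {r : Fin (K + 1) → Fin n → ℝ} {u : Fin K → Fin m → ℝ}
    (h : IsTrajectory A B r u) (i : Fin (K + 1)) :
    outputMap K A B C (r 0, u) i = C *ᵥ r i := by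
  simp only [outputMap, LinearMap.coe_mk, AddHom.coe_mk, h.eq_sum i, mulVec_add, mulVec_sum,
    mulVec_mulVec, Matrix.mul_assoc]

theorem norm_outputMap_sub_le {y : Fin (K + 1) → Fin p → ℝ} {ε : ℝ}
    {r r' : Fin (K + 1) → Fin n → ℝ} {u u' : Fin K → Fin m → ℝ}
    (h : IsTrajectory A B r u) (h' : IsTrajectory A B r' u')
    (hy : ∀ i, l2norm (y i - C *ᵥ r i) ≤ ε) (hy' : ∀ i, l2norm (y i - C *ᵥ r' i) ≤ ε) :
    ‖outputMap K A B C (r 0 - r' 0, u - u')‖ ≤ 2 * ε := by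
  have hε : 0 ≤ ε := (Real.sqrt_nonneg _).trans (hy 0)
  refine (pi_norm_le_iff_of_nonneg (by linarith)).2 fun i => ?_
  calc _ ≤ l2norm (outputMap K A B C (r 0 - r' 0, u - u') i) := norm_le_l2norm _
    _ = l2norm ((y i - C *ᵥ r' i) - (y i - C *ᵥ r i)) := by
        rw [← Pi.sub_apply r, (h.sub h').outputMap_apply C i, Pi.sub_apply, mulVec_sub,
          sub_sub_sub_cancel_left]
    _ ≤ 2 * ε := by linarith [l2norm_sub_le (y i - C *ᵥ r' i) (y i - C *ᵥ r i), hy i, hy' i]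

variable {C}

theorem eq_zero_of_outputMap_eq_zero {s : ℕ} {δ : ℝ} (hδ : δ < 1) (hCB : RIP (2 * s) δ (C * B))
    (hRank : SparseRankCondition A B C K s) {x : Fin n → ℝ} {v : Fin K → Fin m → ℝ}
    (hv : ∀ k, Sparse (2 * s) (v k)) (h0 : outputMap K A B C (x, v) = 0) : (x, v) = 0 := by
  have hx : x = 0 := hRank x v hv fun i => congrFun h0 i
  set r := trajectory A B x v
  have hr : IsTrajectory A B r v := isTrajectory_trajectory A B x v
  have hCr : ∀ i, C *ᵥ r i = 0 := fun i => by
    rw [← hr.outputMap_apply C i]; exact congrFun h0 i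
  -- Once the state vanishes, the next output is `(C * B) *ᵥ v k`, which forces `v k = 0`.
  have hstep : ∀ k, r k.castSucc = 0 → v k = 0 ∧ r k.succ = 0 := fun k hk => by
    have hvk : v k = 0 := hCB.eq_zero_of_mulVec_eq_zero hδ (hv k) <| by
      rw [← mulVec_mulVec, ← hCr k.succ, hr k, hk, mulVec_zero, zero_add]
    exact ⟨hvk, by rw [hr k, hk, hvk, mulVec_zero, mulVec_zero, add_zero]⟩
  have hr0 : ∀ i, r i = 0 := fun i => Fin.induction hx (fun k hk => (hstep k hk).2) i
  exact Prod.ext hx (funext fun k => (hstep k (hr0 _)).1)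

variable (n) in
def supportedInputs (S : Fin K → Finset (Fin m)) :
    Submodule ℝ ((Fin n → ℝ) × (Fin K → Fin m → ℝ)) where
  carrier := {z | ∀ k, ∀ i ∉ S k, z.2 k i = 0}
  add_mem' ha hb k i hi := by simp [ha k i hi, hb k i hi]
  zero_mem' _ _ _ := rfl
  smul_mem' c _ ha k i hi := by simp [ha k i hi]

theorem sparse_of_mem_supportedInputs {S : Fin K → Finset (Fin m)}
    {z : (Fin n → ℝ) × (Fin K → Fin m → ℝ)} (hz : z ∈ supportedInputs n S) (k : Fin K) :
    Sparse (S k).card (z.2 k) :=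
  card_le_card fun i hi => by
    by_contra hik
    exact (mem_filter.1 hi).2 (hz k i hik)

theorem exists_norm_le_mul_norm_outputMap {s : ℕ} {δ : ℝ} (hδ : δ < 1)
    (hCB : RIP (2 * s) δ (C * B)) (hRank : SparseRankCondition A B C K s) :
    ∃ c, 0 ≤ c ∧ ∀ x v, (∀ k, Sparse (2 * s) (v k)) →
      ‖((x, v) : (Fin n → ℝ) × (Fin K → Fin m → ℝ))‖ ≤ c * ‖outputMap K A B C (x, v)‖ := by
  obtain ⟨c, hc0, hc⟩ := (outputMap K A B C).exists_norm_le_mul_norm_of_disjoint_ker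
    (fun S : {S : Fin K → Finset (Fin m) // ∀ k, (S k).card ≤ 2 * s} => supportedInputs n S.1)
    fun S => LinearMap.disjoint_ker.2 fun z hz h0 => eq_zero_of_outputMap_eq_zero hδ hCB hRank
      (fun k => (sparse_of_mem_supportedInputs hz k).trans (S.2 k)) h0
  refine ⟨c, hc0, fun x v hv => hc ⟨fun k => univ.filter (v k · ≠ 0), hv⟩ _ fun k i hi => ?_⟩
  simpa using hi

end LinearSystem

theorem stmt11_general {n p m K s : ℕ}
    (A : Matrix (Fin n) (Fin n) ℝ) (B : Matrix (Fin n) (Fin m) ℝ)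
    (C : Matrix (Fin p) (Fin n) ℝ)
    (δ : ℝ) (hδ : δ < Real.sqrt 2 - 1) (hCB : RIP (2 * s) δ (C * B))
    (hRank : SparseRankCondition A B C K s) :
    ∃ Cs : ℝ, ∀ ε : ℝ, 0 < ε →
      ∀ (rbar : Fin (K + 1) → Fin n → ℝ) (ubar : Fin K → Fin m → ℝ)
        (y e : Fin (K + 1) → Fin p → ℝ),
        (∀ k, Sparse s (ubar k)) →
        (∀ k : Fin K, rbar k.succ = A.mulVec (rbar k.castSucc) + B.mulVec (ubar k)) →
        (∀ k, y k = C.mulVec (rbar k) + e k) →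
        (∀ k, l2norm (e k) ≤ ε) →
        ∀ (rstar : Fin (K + 1) → Fin n → ℝ) (ustar : Fin K → Fin m → ℝ),
          SolutionP2 A B C y ε rstar ustar →
          (∀ k, Sparse s (ustar k)) →
          ∑ k, l2norm (ustar k - ubar k) ≤ Cs * ε := by
  have hδ1 : δ < 1 := by linarith [(Real.sqrt_lt' two_pos).2 (by norm_num : (2 : ℝ) < 2 ^ 2)]
  obtain ⟨c, hc0, hc⟩ := exists_norm_le_mul_norm_outputMap hδ1 hCB hRank
  refine ⟨2 * K * √m * c, fun ε _ rbar ubar y e hubar hbar hy he rstar ustar hsol hustar => ?_⟩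
  set z : (Fin n → ℝ) × (Fin K → Fin m → ℝ) := (rstar 0 - rbar 0, ustar - ubar)
  have hsparse : ∀ k, Sparse (2 * s) (ustar k - ubar k) := fun k => by
    rw [two_mul]; exact (hustar k).sub (hubar k)
  have hout : ‖outputMap K A B C z‖ ≤ 2 * ε :=
    norm_outputMap_sub_le C hsol.1.1 hbar hsol.1.2 fun i => by
      rw [hy i, add_sub_cancel_left]; exact he i
  have hz : ‖z‖ ≤ c * (2 * ε) := (hc _ (ustar - ubar) hsparse).trans (by gcongr)
  calc ∑ k, l2norm (ustar k - ubar k) ≤ ∑ _k : Fin K, √m * ‖z‖ :=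
        sum_le_sum fun k _ => (l2norm_le_sqrt_mul_norm _).trans <| by
          gcongr; exact (norm_le_pi_norm (ustar - ubar) k).trans (norm_snd_le z)
    _ = K * √m * ‖z‖ := by simp [mul_assoc]
    _ ≤ K * √m * (c * (2 * ε)) := by gcongr
    _ = 2 * K * √m * c * ε := by ring

/-- Theorem 3 of the paper (noisy recovery under the
observability condition). -/
theorem stmt11 {n p m K s : ℕ}
    (A : Matrix (Fin n) (Fin n) ℝ) (B : Matrix (Fin n) (Fin m) ℝ)
    (C : Matrix (Fin p) (Fin n) ℝ)
    (hObs : (obsMat A C K).rank = n)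
    (δ : ℝ) (hδ : δ < Real.sqrt 2 - 1) (hCB : RIP (2 * s) δ (C * B))
    (hRank : SparseRankCondition A B C K s) :
    ∃ Cs : ℝ, ∀ ε : ℝ, 0 < ε →
      ∀ (rbar : Fin (K + 1) → Fin n → ℝ) (ubar : Fin K → Fin m → ℝ)
        (y e : Fin (K + 1) → Fin p → ℝ),
        (∀ k, Sparse s (ubar k)) →
        (∀ k : Fin K, rbar k.succ = A.mulVec (rbar k.castSucc) + B.mulVec (ubar k)) →
        (∀ k, y k = C.mulVec (rbar k) + e k) →
        (∀ k, l2norm (e k) ≤ ε) →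
        ∀ (rstar : Fin (K + 1) → Fin n → ℝ) (ustar : Fin K → Fin m → ℝ),
          SolutionP2 A B C y ε rstar ustar →
          (∀ k, Sparse s (ustar k)) →
          ∑ k, l2norm (ustar k - ubar k) ≤ Cs * ε :=
  stmt11_general A B C δ hδ hCB hRank
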